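/- Let 0 < ε₁ < 1 and consider points p₁ = (0,0,w₂,0,…,0), p₂ = (0,0,0,w₃,0,…,0) with |w₂| = |w₃| = 1 on the binding {w₀ = 0} of the Brieskorn open book. Then K_ε(p₁) = ε₁/(1+ε₁) > 0 and K_ε(p₂) = −ε₁/(1−ε₁) < 0, where K_ε(w) = Δ_ε(w)/H_ε(w), Δ_ε(w) = Σⱼ εⱼ(|w_{2j}|² − |w_{2j+1}|²), H_ε(w) = ‖w‖² + Δ_ε(w). Hence K_ε has mixed sign on the binding, and the generating Hamiltonian K_ε of the Katok return map does not satisfy the weakened twist condition α_ε(X_{K_ε}) > 0 at the boundary. -/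
import Mathlib


open Complex Finset

/-- The Katok Hamiltonian `K_ε = Δ_ε / H_ε` has mixed sign on the binding:
at `p₁ = (0,0,w₂,0,…,0)` it equals `ε₁/(1+ε₁) > 0`, while at
`p₂ = (0,0,0,w₃,0,…,0)` it equals `-ε₁/(1-ε₁) < 0`. Hence the weakened twist
condition fails for the Katok return map. -/
theorem stmt_16 (m : ℕ) (hm : 1 ≤ m) (n : ℕ) (hn : n = 2 * m + 1)
    (ε : ℕ → ℝ) (hε1 : 0 < ε 1) (hε1' : ε 1 < 1)
    (w₂ w₃ : ℂ) (hw₂ : ‖w₂‖ = 1) (hw₃ : ‖w₃‖ = 1)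
    (p₁ p₂ : ℕ → ℂ)
    (hp₁ : ∀ j, p₁ j = if j = 2 then w₂ else 0)
    (hp₂ : ∀ j, p₂ j = if j = 3 then w₃ else 0)
    (Δ : (ℕ → ℂ) → ℝ)
    (hΔ : ∀ x, Δ x = ∑ j ∈ Icc 1 m, ε j * (‖x (2 * j)‖ ^ 2 - ‖x (2 * j + 1)‖ ^ 2))
    (Hε : (ℕ → ℂ) → ℝ)
    (hHε : ∀ x, Hε x = (∑ j ∈ range (n + 1), ‖x j‖ ^ 2) + Δ x)
    (K : (ℕ → ℂ) → ℝ) (hK : ∀ x, K x = Δ x / Hε x) :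
    K p₁ = ε 1 / (1 + ε 1) ∧ 0 < K p₁ ∧
    K p₂ = -(ε 1 / (1 - ε 1)) ∧ K p₂ < 0 := by
  have hmem1 : (1 : ℕ) ∈ Icc 1 m := by simp [hm]
  have hΔ1 : Δ p₁ = ε 1 := by
    rw [hΔ, Finset.sum_eq_single 1]
    · simp [hp₁, hw₂]
    · intro j hj hj1
      have h2 : 2 * j ≠ 2 := by omega
      simp [hp₁, h2]
    · intro h; exact absurd hmem1 h
  have hΔ2 : Δ p₂ = -ε 1 := by
    rw [hΔ, Finset.sum_eq_single 1]
    · simp [hp₂, hw₃]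
    · intro j hj hj1
      have hj1' : 1 ≤ j := (Finset.mem_Icc.mp hj).1
      have h2 : 2 * j ≠ 3 := by omega
      have h3 : 2 * j + 1 ≠ 3 := by omega
      simp [hp₂, h2, h3]
    · intro h; exact absurd hmem1 h
  have hS1 : (∑ j ∈ range (n + 1), ‖p₁ j‖ ^ 2) = 1 := by
    rw [Finset.sum_eq_single 2]
    · simp [hp₁, hw₂]
    · intro j hj hj2; simp [hp₁, hj2]
    · intro h; exfalso; exact h (Finset.mem_range.mpr (by omega))
  have hS2 : (∑ j ∈ range (n + 1), ‖p₂ j‖ ^ 2) = 1 := by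
    rw [Finset.sum_eq_single 3]
    · simp [hp₂, hw₃]
    · intro j hj hj2; simp [hp₂, hj2]
    · intro h; exfalso; exact h (Finset.mem_range.mpr (by omega))
  have hK1 : K p₁ = ε 1 / (1 + ε 1) := by
    rw [hK, hHε, hΔ1, hS1]
  have hK2 : K p₂ = -(ε 1 / (1 - ε 1)) := by
    rw [hK, hHε, hΔ2, hS2]
    rw [show (1 : ℝ) + -ε 1 = 1 - ε 1 from by ring, neg_div]
  refine ⟨hK1, ?_, hK2, ?_⟩
  · rw [hK1]; positivity
  · rw [hK2]
    have : 0 < ε 1 / (1 - ε 1) := div_pos hε1 (by linarith)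
    linarith
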